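/- arXiv:1008.3942 — 3 statements merged into one kernel-verified Lean document; each statement's English description precedes it below -/
import Mathlib

section
/- Assume Krasikov's bound: for nonnegative integers n, α and x with q² < x < s², |L_n^{(α)}(x)| < √((n+α)!/n!) · √(x(s²−q²)/r(x)) · e^{x/2} x^{−(α+1)/2}, where s = √(n+α+1) + √n, q = √(n+α+1) − √n, r(x) = (x−q²)(s²−x). Then for integers 1 ≤ m ≤ N−1, |A_m| < √(4√(Nm)/(4Nm − m²)) ≤ C N^{−1/4} m^{−1/4} for some absolute constant C, where A_m = e^{−N/2} N^{(N−m−1)/2} √(m!/(N−1)!) L_m^{(N−m−1)}(N). -/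
/-!
Apply Krasikov's bound with `n = m`, `α = N - m - 1`, `x = N`. Then `s = √N + √m` and
`q = √N - √m`, so `q² < N < s²` (as `m < 4N`), `s² - q² = 4√(Nm)` and
`r(N) = (2√(Nm) - m)(2√(Nm) + m) = 4Nm - m²`. All the factorial, exponential and power factors
of `A_m` cancel exactly against those of the bound, leaving `√(4√(Nm) / (4Nm - m²))`; finally
`4Nm - m² ≥ 3Nm` because `m ≤ N`.
-/

open scoped Nat
open Finset

/-- The associated Laguerre polynomial `L_n^{(α)}(x)`. -/
noncomputable def assocLaguerre (n α : ℕ) (x : ℝ) : ℝ :=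
  ∑ k ∈ range (n + 1),
    (-1 : ℝ) ^ k * (((n + α)! : ℝ) / ((k ! : ℝ) * ((n - k)! : ℝ) * ((α + k)! : ℝ))) * x ^ k

open Real

section

variable {a b : ℝ}

lemma sqrt_add_sqrt_sq (ha : 0 ≤ a) (hb : 0 ≤ b) :
    (√a + √b) ^ 2 = a + b + 2 * √(a * b) := by
  rw [add_sq, sq_sqrt ha, sq_sqrt hb, sqrt_mul ha]; ring

lemma sqrt_sub_sqrt_sq (ha : 0 ≤ a) (hb : 0 ≤ b) :
    (√a - √b) ^ 2 = a + b - 2 * √(a * b) := by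
  rw [sub_sq, sq_sqrt ha, sq_sqrt hb, sqrt_mul ha]; ring

lemma sqrt_sub_sqrt_sq_lt (ha : 0 ≤ a) (hb : 0 < b) (hba : b < 4 * a) :
    (√a - √b) ^ 2 < a := by
  have : b / 2 < √(a * b) := lt_sqrt_of_sq_lt (by nlinarith)
  rw [sqrt_sub_sqrt_sq ha hb.le]; linarith

lemma lt_sqrt_add_sqrt_sq (ha : 0 ≤ a) (hb : 0 < b) : a < (√a + √b) ^ 2 := by
  rw [sqrt_add_sqrt_sq ha hb.le]; linarith [sqrt_nonneg (a * b)]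

lemma sqrt_add_sqrt_sq_sub_sqrt_sub_sqrt_sq (ha : 0 ≤ a) (hb : 0 ≤ b) :
    (√a + √b) ^ 2 - (√a - √b) ^ 2 = 4 * √(a * b) := by
  rw [sqrt_add_sqrt_sq ha hb, sqrt_sub_sqrt_sq ha hb]; ring

lemma sub_sqrt_sub_sqrt_sq_mul_sqrt_add_sqrt_sq_sub (ha : 0 ≤ a) (hb : 0 ≤ b) :
    (a - (√a - √b) ^ 2) * ((√a + √b) ^ 2 - a) = 4 * a * b - b ^ 2 := by
  rw [sqrt_add_sqrt_sq ha hb, sqrt_sub_sqrt_sq ha hb]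
  linear_combination 4 * sq_sqrt (mul_nonneg ha hb)

end

lemma abs_exp_mul_rpow_mul_sqrt_mul_lt {x p q α u v L : ℝ} (hx : 0 < x) (hp : 0 < p)
    (hq : 0 < q)
    (hL : |L| < √(q / p) * √(x * u / v) * exp (x / 2) * x ^ (-(α + 1) / 2)) :
    |exp (-x / 2) * x ^ (α / 2) * √(p / q) * L| < √(u / v) := by
  have hpos : 0 < exp (-x / 2) * x ^ (α / 2) * √(p / q) := by positivity
  have hexp : exp (-x / 2) * exp (x / 2) = 1 := by
    rw [← exp_add, neg_div, neg_add_cancel, exp_zero]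
  have hfac : √(p / q) * √(q / p) = 1 := by
    rw [← sqrt_mul (by positivity), div_mul_div_comm, mul_comm q, div_self (by positivity),
      sqrt_one]
  have hpow : x ^ (α / 2) * x ^ (-(α + 1) / 2) * √x = 1 := by
    rw [sqrt_eq_rpow, ← rpow_add hx, ← rpow_add hx]; ring_nf; exact rpow_zero x
  calc |exp (-x / 2) * x ^ (α / 2) * √(p / q) * L|
      = exp (-x / 2) * x ^ (α / 2) * √(p / q) * |L| := by rw [abs_mul, abs_of_pos hpos]
    _ < exp (-x / 2) * x ^ (α / 2) * √(p / q)
          * (√(q / p) * (√x * √(u / v)) * exp (x / 2) * x ^ (-(α + 1) / 2)) := by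
        rw [← sqrt_mul hx.le, ← mul_div_assoc]; exact mul_lt_mul_of_pos_left hL hpos
    _ = (exp (-x / 2) * exp (x / 2)) * (x ^ (α / 2) * x ^ (-(α + 1) / 2) * √x)
          * (√(p / q) * √(q / p)) * √(u / v) := by ring
    _ = √(u / v) := by rw [hexp, hpow, hfac]; ring

lemma rpow_neg_one_div_four_sq {x : ℝ} (hx : 0 ≤ x) : (x ^ (-(1 : ℝ) / 4)) ^ 2 = (√x)⁻¹ := by
  rw [← rpow_mul_natCast hx, sqrt_eq_rpow, ← rpow_neg hx]; norm_num

lemma sqrt_four_sqrt_div_le {a b : ℝ} (hb : 0 < b) (hba : b ≤ a) :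
    √(4 * √(a * b) / (4 * a * b - b ^ 2))
      ≤ 2 / √3 * a ^ (-(1 : ℝ) / 4) * b ^ (-(1 : ℝ) / 4) := by
  have ha : 0 < a := hb.trans_le hba
  have hab : 0 < √(a * b) := sqrt_pos.2 (mul_pos ha hb)
  have hratio : 4 * √(a * b) / (4 * a * b - b ^ 2) ≤ 4 / 3 / √(a * b) := by
    have h3 : 3 * (a * b) ≤ 4 * a * b - b ^ 2 := by nlinarith
    rw [div_le_div_iff₀ (by nlinarith) hab, mul_assoc, mul_self_sqrt (mul_pos ha hb).le]
    linarith
  have hrhs : (2 / √3 * a ^ (-(1 : ℝ) / 4) * b ^ (-(1 : ℝ) / 4)) ^ 2 = 4 / 3 / √(a * b) := by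
    rw [mul_pow, mul_pow, div_pow, sq_sqrt (by norm_num : (0 : ℝ) ≤ 3),
      rpow_neg_one_div_four_sq ha.le, rpow_neg_one_div_four_sq hb.le, sqrt_mul ha.le]
    field_simp; norm_num
  exact sqrt_le_iff.2 ⟨by positivity, hratio.trans_eq hrhs.symm⟩

/-- Assume Krasikov's bound: for nonnegative integers `n, α` and real `x` with
`q² < x < s²`,
`|L_n^{(α)}(x)| < √((n+α)!/n!) · √(x(s²−q²)/r(x)) · e^{x/2} x^{−(α+1)/2}`,
where `s = √(n+α+1) + √n`, `q = √(n+α+1) − √n`, `r(x) = (x−q²)(s²−x)`.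
Then for integers `1 ≤ m ≤ N−1`,
`|A_m| < √(4√(Nm)/(4Nm − m²)) ≤ C N^{−1/4} m^{−1/4}` for some absolute constant `C`, where
`A_m = e^{−N/2} N^{(N−m−1)/2} √(m!/(N−1)!) L_m^{(N−m−1)}(N)`. -/
theorem A_m_bound
    (hK : ∀ (n α : ℕ) (x : ℝ),
      (Real.sqrt ((n : ℝ) + α + 1) - Real.sqrt n) ^ 2 < x →
      x < (Real.sqrt ((n : ℝ) + α + 1) + Real.sqrt n) ^ 2 →
      |assocLaguerre n α x|
        < Real.sqrt (((n + α)! : ℝ) / (n ! : ℝ))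
          * Real.sqrt (x * ((Real.sqrt ((n : ℝ) + α + 1) + Real.sqrt n) ^ 2
                              - (Real.sqrt ((n : ℝ) + α + 1) - Real.sqrt n) ^ 2)
              / ((x - (Real.sqrt ((n : ℝ) + α + 1) - Real.sqrt n) ^ 2)
                  * ((Real.sqrt ((n : ℝ) + α + 1) + Real.sqrt n) ^ 2 - x)))
          * Real.exp (x / 2) * x ^ (-((α : ℝ) + 1) / 2)) :
    ∃ C : ℝ, 0 < C ∧ ∀ N m : ℕ, 2 ≤ N → 1 ≤ m → m ≤ N - 1 →
      |Real.exp (-(N : ℝ) / 2) * (N : ℝ) ^ (((N : ℝ) - m - 1) / 2)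
          * Real.sqrt ((m ! : ℝ) / ((N - 1)! : ℝ)) * assocLaguerre m (N - m - 1) N|
        < Real.sqrt (4 * Real.sqrt ((N : ℝ) * m) / (4 * (N : ℝ) * m - (m : ℝ) ^ 2)) ∧
      Real.sqrt (4 * Real.sqrt ((N : ℝ) * m) / (4 * (N : ℝ) * m - (m : ℝ) ^ 2))
        ≤ C * (N : ℝ) ^ (-(1 : ℝ) / 4) * (m : ℝ) ^ (-(1 : ℝ) / 4) := by
  refine ⟨2 / √3, by positivity, fun N m _ hm hmN => ?_⟩
  have hN : (0 : ℝ) < N := by exact_mod_cast (by omega : 0 < N)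
  have hm₀ : (0 : ℝ) < m := by exact_mod_cast hm
  have hmN' : (m : ℝ) ≤ N := by exact_mod_cast (by omega : m ≤ N)
  have hα : ((N - m - 1 : ℕ) : ℝ) = N - m - 1 := by
    rw [Nat.sub_sub, Nat.cast_sub (by omega)]; push_cast; ring
  have hK' := hK m (N - m - 1) N
  rw [show (m : ℝ) + ((N - m - 1 : ℕ) : ℝ) + 1 = N by rw [hα]; ring, hα,
    show m + (N - m - 1) = N - 1 by omega,
    sqrt_add_sqrt_sq_sub_sqrt_sub_sqrt_sq hN.le hm₀.le,
    sub_sqrt_sub_sqrt_sq_mul_sqrt_add_sqrt_sq_sub hN.le hm₀.le] at hK'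
  have hL := hK' (sqrt_sub_sqrt_sq_lt hN.le hm₀ (by linarith)) (lt_sqrt_add_sqrt_sq hN.le hm₀)
  exact ⟨abs_exp_mul_rpow_mul_sqrt_mul_lt hN (by positivity) (by positivity) hL,
    sqrt_four_sqrt_div_le hm₀ hmN'⟩
end

section
/- (One-body reduction formula for the quadratic evolution applied to factorized data) Let φ ∈ L²(ℝ³) with ‖φ‖ = 1 and let G : ℝ³ × ℝ³ → ℂ with G(x,·) ∈ L²(ℝ³). Then the symmetric (N−1)-particle function Ψ_x(x₁,…,x_{N−1}) = Σ_{i=1}^{N−1} G(x, x_i) ∏_{j≠i} φ(x_j) − N (∫ G(x,z) \overline{φ(z)} dz) ∏_{j=1}^{N−1} φ(x_j) satisfies ⟨Ψ_y, Ψ_x⟩_{L²(ℝ^{3(N−1)})} = (N−1) ∫ \overline{G(y,z)} G(x,z) dz − (N−2) (∫ \overline{G(y,z)} φ(z) dz)(∫ G(x,z) \overline{φ(z)} dz). -/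
/-! Write `f = G(x,·)`, `g = G(y,·)` and `n = N - 1`. Both Ψ's are linear combinations of product
states: the condensate `∏ⱼ φ(Xⱼ)` and, for each slot `i`, the state with the excitation in slot `i`
and `φ` in all others. By Fubini the overlap of two product states is the product of the
one-particle overlaps, and since `⟨φ, φ⟩ = 1` only slots where a factor differs from `φ` count:
`⟨g, f⟩` for excitations in the same slot, `⟨g, φ⟩⟨φ, f⟩` for excitations in different slots.
The coefficient of `⟨g, φ⟩⟨φ, f⟩` thus collects `n(n-1)` off-diagonal pairs, `-2Nn` from the cross
terms with the condensate and `N²` from the condensate itself, in total `-(N - 2)`. -/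

open MeasureTheory Finset
open scoped ComplexConjugate

noncomputable def PsiFun (N : ℕ) (φ : (Fin 3 → ℝ) → ℂ)
    (G : (Fin 3 → ℝ) → (Fin 3 → ℝ) → ℂ) (x : Fin 3 → ℝ)
    (X : Fin (N - 1) → Fin 3 → ℝ) : ℂ :=
  (∑ i : Fin (N - 1), G x (X i) * ∏ j ∈ univ.erase i, φ (X j))
    - (N : ℂ) * (∫ z, G x z * conj (φ z)) * ∏ j : Fin (N - 1), φ (X j)

section ProductStates

variable {α ι : Type*} [Fintype ι]

lemma conj_prod_mul_prod (u v : ι → α → ℂ) (X : ι → α) :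
    conj (∏ j, u j (X j)) * ∏ j, v j (X j) = ∏ j, conj (u j (X j)) * v j (X j) := by
  rw [map_prod, prod_mul_distrib]

variable [MeasurableSpace α] {μ : Measure α}

lemma integrable_conj_mul_of_memLp {f g : α → ℂ} (hf : MemLp f 2 μ) (hg : MemLp g 2 μ) :
    Integrable (fun z => conj (f z) * g z) μ :=
  hf.star.integrable_mul hg

lemma integral_conj_mul_self (f : α → ℂ) :
    ∫ z, conj (f z) * f z ∂μ = ((∫ z, ‖f z‖ ^ 2 ∂μ : ℝ) : ℂ) := by
  rw [← integral_complex_ofReal]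
  simp_rw [Complex.ofReal_pow, RCLike.conj_mul]
  rfl

variable [SigmaFinite μ]

lemma integrable_conj_prod_mul_prod {u v : ι → α → ℂ} (hu : ∀ j, MemLp (u j) 2 μ)
    (hv : ∀ j, MemLp (v j) 2 μ) :
    Integrable (fun X : ι → α => conj (∏ j, u j (X j)) * ∏ j, v j (X j))
      (Measure.pi fun _ => μ) := by
  simp_rw [conj_prod_mul_prod]
  exact Integrable.fintype_prod fun j => integrable_conj_mul_of_memLp (hu j) (hv j)

lemma integral_conj_prod_mul_prod (u v : ι → α → ℂ) :
    ∫ X : ι → α, conj (∏ j, u j (X j)) * ∏ j, v j (X j) ∂(Measure.pi fun _ => μ)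
      = ∏ j, ∫ z, conj (u j z) * v j z ∂μ := by
  simp_rw [conj_prod_mul_prod]
  exact integral_fintype_prod_eq_prod fun j z => conj (u j z) * v j z

lemma integral_conj_sum_mul_sum {A B : Type*} [Fintype A] [Fintype B] (a : A → ℂ) (b : B → ℂ)
    {u : A → ι → α → ℂ} {v : B → ι → α → ℂ} (hu : ∀ p j, MemLp (u p j) 2 μ)
    (hv : ∀ q j, MemLp (v q j) 2 μ) :
    ∫ X : ι → α, conj (∑ p, a p * ∏ j, u p j (X j)) * ∑ q, b q * ∏ j, v q j (X j)
        ∂(Measure.pi fun _ => μ)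
      = ∑ p, ∑ q, conj (a p) * b q * ∏ j, ∫ z, conj (u p j z) * v q j z ∂μ := by
  have expand : ∀ X : ι → α,
      conj (∑ p, a p * ∏ j, u p j (X j)) * ∑ q, b q * ∏ j, v q j (X j)
        = ∑ p, ∑ q, conj (a p) * b q * (conj (∏ j, u p j (X j)) * ∏ j, v q j (X j)) := by
    intro X
    simp only [map_sum, map_mul, sum_mul_sum]
    exact sum_congr rfl fun p _ => sum_congr rfl fun q _ => by ring
  have hint := fun p q => integrable_conj_prod_mul_prod (hu p) (hv q)
  simp_rw [expand]
  rw [integral_finsetSum _ fun p _ => integrable_finsetSum _ fun q _ => (hint p q).const_mul _]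
  refine sum_congr rfl fun p _ => ?_
  rw [integral_finsetSum _ fun q _ => (hint p q).const_mul _]
  refine sum_congr rfl fun q _ => ?_
  rw [integral_const_mul, integral_conj_prod_mul_prod]

end ProductStates

section OneExcitation

variable {α ι : Type*} [DecidableEq ι]

/-- `none` indexes the factors `φ, …, φ` of the condensate, `some i` those of the state with
`f` in slot `i` and `φ` in every other slot. -/
def oneExcitationFactors (φ f : α → ℂ) : Option ι → ι → α → ℂ
  | none => fun _ => φ
  | some i => Function.update (fun _ => φ) i f

lemma memLp_oneExcitationFactors [MeasurableSpace α] {μ : Measure α} {φ f : α → ℂ}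
    (hφ : MemLp φ 2 μ) (hf : MemLp f 2 μ) (p : Option ι) (j : ι) :
    MemLp (oneExcitationFactors φ f p j) 2 μ := by
  cases p with
  | none => exact hφ
  | some i =>
    by_cases h : j = i
    · subst h
      simpa [oneExcitationFactors] using hf
    · simpa [oneExcitationFactors, h] using hφ

variable [Fintype ι]

lemma prod_update_const_apply (φ f : α → ℂ) (i : ι) (X : ι → α) :
    ∏ j, Function.update (fun _ => φ) i f j (X j) = f (X i) * ∏ j ∈ univ.erase i, φ (X j) := by
  rw [← mul_prod_erase univ _ (mem_univ i), Function.update_self]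
  exact congrArg _ (prod_congr rfl fun j hj => by rw [Function.update_of_ne (ne_of_mem_erase hj)])

lemma excitation_sub_eq_sum_option (φ f : α → ℂ) (c : ℂ) (X : ι → α) :
    (∑ i, f (X i) * ∏ j ∈ univ.erase i, φ (X j)) - c * ∏ j, φ (X j)
      = ∑ p : Option ι, p.elim (-c) (fun _ => 1) * ∏ j, oneExcitationFactors φ f p j (X j) := by
  simp [Fintype.sum_option, oneExcitationFactors, prod_update_const_apply]
  ring

lemma sum_ite_eq_add_card_sub_one_mul (i : ι) (a b : ℂ) :
    ∑ k, (if i = k then a else b) = a + (Fintype.card ι - 1) * b := by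
  rw [← add_sum_erase _ _ (mem_univ i), if_pos rfl,
    sum_congr rfl fun k hk => if_neg (ne_of_mem_erase hk).symm, sum_const,
    card_erase_of_mem (mem_univ i), card_univ, nsmul_eq_mul,
    Nat.cast_sub (Fintype.card_pos_iff.mpr ⟨i⟩), Nat.cast_one]

variable [MeasurableSpace α] {μ : Measure α} {φ f g : α → ℂ}

section Overlaps

variable (hφ1 : ∫ z, conj (φ z) * φ z ∂μ = 1)
include hφ1

lemma prod_integral_oneExcitationFactors_none_none :
    ∏ j : ι, ∫ z, conj (oneExcitationFactors φ g none j z) * oneExcitationFactors φ f none j z ∂μ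
      = 1 := by
  simp [oneExcitationFactors, hφ1]

lemma prod_integral_oneExcitationFactors_none_some (k : ι) :
    ∏ j, ∫ z, conj (oneExcitationFactors φ g none j z) * oneExcitationFactors φ f (some k) j z ∂μ
      = ∫ z, conj (φ z) * f z ∂μ := by
  rw [Fintype.prod_eq_single k fun j hj => by simp [oneExcitationFactors, hj, hφ1]]
  simp [oneExcitationFactors]

lemma prod_integral_oneExcitationFactors_some_none (i : ι) :
    ∏ j, ∫ z, conj (oneExcitationFactors φ g (some i) j z) * oneExcitationFactors φ f none j z ∂μ
      = ∫ z, conj (g z) * φ z ∂μ := by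
  rw [Fintype.prod_eq_single i fun j hj => by simp [oneExcitationFactors, hj, hφ1]]
  simp [oneExcitationFactors]

lemma prod_integral_oneExcitationFactors_some_some (i k : ι) :
    ∏ j, ∫ z, conj (oneExcitationFactors φ g (some i) j z)
        * oneExcitationFactors φ f (some k) j z ∂μ
      = if i = k then ∫ z, conj (g z) * f z ∂μ
        else (∫ z, conj (g z) * φ z ∂μ) * ∫ z, conj (φ z) * f z ∂μ := by
  by_cases hik : i = k
  · subst hik
    rw [Fintype.prod_eq_single i fun j hj => by simp [oneExcitationFactors, hj, hφ1]]
    simp [oneExcitationFactors]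
  · rw [Fintype.prod_eq_mul i k hik fun j hj => by simp [oneExcitationFactors, hj, hφ1]]
    simp [oneExcitationFactors, hik, Ne.symm hik]

end Overlaps

theorem integral_conj_excitation_mul_excitation [SigmaFinite μ] (hφ : MemLp φ 2 μ)
    (hf : MemLp f 2 μ) (hg : MemLp g 2 μ) (hφ1 : ∫ z, conj (φ z) * φ z ∂μ = 1) (c d : ℂ) :
    ∫ X : ι → α, conj ((∑ i, g (X i) * ∏ j ∈ univ.erase i, φ (X j)) - c * ∏ j, φ (X j))
        * ((∑ i, f (X i) * ∏ j ∈ univ.erase i, φ (X j)) - d * ∏ j, φ (X j))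
        ∂(Measure.pi fun _ => μ)
      = Fintype.card ι * ∫ z, conj (g z) * f z ∂μ
        + Fintype.card ι * (Fintype.card ι - 1)
          * (∫ z, conj (g z) * φ z ∂μ) * (∫ z, conj (φ z) * f z ∂μ)
        - Fintype.card ι * conj c * ∫ z, conj (φ z) * f z ∂μ
        - Fintype.card ι * d * (∫ z, conj (g z) * φ z ∂μ) + conj c * d := by
  simp_rw [excitation_sub_eq_sum_option]
  rw [integral_conj_sum_mul_sum _ _ (memLp_oneExcitationFactors hφ hg)
    (memLp_oneExcitationFactors hφ hf)]
  simp only [Fintype.sum_option, Option.elim_none, Option.elim_some,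
    prod_integral_oneExcitationFactors_none_none hφ1,
    prod_integral_oneExcitationFactors_none_some hφ1,
    prod_integral_oneExcitationFactors_some_none hφ1,
    prod_integral_oneExcitationFactors_some_some hφ1, map_one, map_neg, one_mul, mul_one,
    sum_ite_eq_add_card_sub_one_mul, sum_const, card_univ, nsmul_eq_mul]
  ring

end OneExcitation

/-- (One-body reduction formula for the quadratic evolution applied to
factorized data) Let `φ ∈ L²(ℝ³)` with `‖φ‖ = 1` and let `G : ℝ³ × ℝ³ → ℂ` with
`G(x,·) ∈ L²(ℝ³)`. Then
`⟨Ψ_y, Ψ_x⟩_{L²(ℝ^{3(N−1)})} = (N−1) ∫ conj(G(y,z)) G(x,z) dz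
  − (N−2) (∫ conj(G(y,z)) φ(z) dz)(∫ G(x,z) conj(φ(z)) dz)`. -/
theorem one_body_reduction (N : ℕ) (hN : 2 ≤ N)
    (φ : (Fin 3 → ℝ) → ℂ) (G : (Fin 3 → ℝ) → (Fin 3 → ℝ) → ℂ)
    (hφ : MemLp φ 2 volume) (hφnorm : ∫ z, ‖φ z‖ ^ 2 = 1)
    (x y : Fin 3 → ℝ)
    (hGx : MemLp (G x) 2 volume) (hGy : MemLp (G y) 2 volume) :
    (∫ X : Fin (N - 1) → Fin 3 → ℝ, conj (PsiFun N φ G y X) * PsiFun N φ G x X)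
      = ((N : ℂ) - 1) * (∫ z, conj (G y z) * G x z)
        - ((N : ℂ) - 2) * (∫ z, conj (G y z) * φ z) * (∫ z, G x z * conj (φ z)) := by
  have hφ1 : ∫ z, conj (φ z) * φ z = 1 := by
    rw [integral_conj_mul_self, hφnorm, Complex.ofReal_one]
  have hconj : conj (∫ z, G y z * conj (φ z)) = ∫ z, conj (G y z) * φ z := by
    simp_rw [← integral_conj, map_mul, Complex.conj_conj]
  have hcomm : ∫ z, conj (φ z) * G x z = ∫ z, G x z * conj (φ z) := by
    simp_rw [mul_comm]
  have hcard : ((Fintype.card (Fin (N - 1)) : ℕ) : ℂ) = N - 1 := by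
    rw [Fintype.card_fin, Nat.cast_sub (by omega), Nat.cast_one]
  have key := integral_conj_excitation_mul_excitation (ι := Fin (N - 1)) hφ hGx hGy hφ1
    ((N : ℂ) * ∫ z, G y z * conj (φ z)) ((N : ℂ) * ∫ z, G x z * conj (φ z))
  rw [← volume_pi, hcard, map_mul, map_natCast, hconj, hcomm] at key
  unfold PsiFun
  rw [key]
  ring
end

section
/- (L² error controls trace-norm convergence for rank considerations) Let γ be a positive trace-class operator on L²(ℝ³) with Tr γ = 1, and let P = |φ⟩⟨φ| be a rank-one projection. If ‖γ − P‖_{HS} ≤ ε, then Tr|γ − P| ≤ C ε for an absolute constant C, where ‖·‖_{HS} is the Hilbert–Schmidt norm. -/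
/-!
Write `T = γ - P`, diagonal in the Hilbert basis `f` with eigenvalues `λₖ`. Expanding in `f`,
`∑ λₖ²` is the Hilbert–Schmidt norm of `T` and `∑ λₖ` its trace `1 - 1 = 0`; in particular
`|λₖ| ≤ ε` for every `k`. Since `γ ≥ 0`, the quadratic form of `T` is nonnegative on the hyperplane
`φ^⊥`, so `T` has at most one negative eigenvalue `λ₋`, and then
`∑ |λₖ| = ∑ λₖ + 2 |λ₋| ≤ 2 ε`.
-/

open RCLike

variable {𝕜 E ι κ : Type*} [RCLike 𝕜] [NormedAddCommGroup E] [InnerProductSpace 𝕜 E]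
local notation "⟪" x ", " y "⟫" => @inner 𝕜 _ _ x y

theorem Summable.sq {c : κ → ℝ} (hc : Summable c) : Summable (fun k => c k ^ 2) :=
  .of_nonneg_of_le (fun k => sq_nonneg _)
    (fun k => by
      rw [← sq_abs, pow_two]
      exact mul_le_mul_of_nonneg_right (hc.abs.le_tsum k fun j _ => abs_nonneg _) (abs_nonneg _))
    (hc.abs.mul_left (∑' j, |c j|))

namespace HilbertBasis

theorem hasSum_norm_inner_sq (b : HilbertBasis ι 𝕜 E) (x : E) :
    HasSum (fun i => ‖⟪b i, x⟫‖ ^ 2) (‖x‖ ^ 2) := by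
  simpa [Real.rpow_two, b.repr_apply_apply] using lp.hasSum_norm (p := 2) (by norm_num) (b.repr x)

theorem tsum_tsum_mul_norm_inner_sq (e : HilbertBasis ι 𝕜 E) (f : HilbertBasis κ 𝕜 E)
    {c : κ → ℝ} (hc : Summable c) :
    ∑' i, ∑' k, c k * ‖⟪f k, e i⟫‖ ^ 2 = ∑' k, c k := by
  have hrow : ∀ k, HasSum (fun i => ‖⟪f k, e i⟫‖ ^ 2) 1 := fun k => by
    simpa only [norm_inner_symm (e _), f.orthonormal.1 k, one_pow] using
      e.hasSum_norm_inner_sq (f k)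
  have habs : Summable (fun p : κ × ι => |c p.1| * ‖⟪f p.1, e p.2⟫‖ ^ 2) := by
    refine (summable_prod_of_nonneg fun p => by positivity).2 ⟨fun k => ?_, ?_⟩
    · exact ((hrow k).mul_left |c k|).summable
    · simp only [((hrow _).mul_left _).tsum_eq, mul_one]
      exact hc.abs
  have hprod : Summable (fun p : κ × ι => c p.1 * ‖⟪f p.1, e p.2⟫‖ ^ 2) :=
    .of_norm (by simpa only [Real.norm_eq_abs, abs_mul, abs_pow, abs_norm] using habs)
  rw [Summable.tsum_comm (f := fun k i => c k * ‖⟪f k, e i⟫‖ ^ 2) hprod]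
  exact tsum_congr fun k => by rw [((hrow k).mul_left (c k)).tsum_eq, mul_one]

theorem hasSum_re_inner_apply_of_apply_eq_inner_smul (e : HilbertBasis ι 𝕜 E)
    {P : E →L[𝕜] E} {φ : E} (hP : ∀ x, P x = ⟪φ, x⟫ • φ) :
    HasSum (fun i => re ⟪e i, P (e i)⟫) (‖φ‖ ^ 2) := by
  convert e.hasSum_norm_inner_sq φ using 2 with i
  rw [hP, inner_smul_right, ← inner_conj_symm φ, RCLike.conj_mul, ← ofReal_pow, ofReal_re]

section Diagonal
variable {T : E →L[𝕜] E} {f : HilbertBasis κ 𝕜 E} {lam : κ → ℝ}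

theorem inner_apply_of_apply_eq_smul (hT : ∀ k, T (f k) = (lam k : 𝕜) • f k) (j : κ) (x : E) :
    ⟪f j, T x⟫ = lam j * ⟪f j, x⟫ := by
  have hsum := ((f.hasSum_repr x).mapL T).mapL (innerSL 𝕜 (f j))
  simp only [map_smul, hT, innerSL_apply_apply, f.repr_apply_apply, smul_eq_mul] at hsum
  refine hsum.unique ?_
  convert hasSum_single j fun k hk => ?_ using 1
  · rw [inner_self_eq_norm_sq_to_K, f.orthonormal.1 j, ofReal_one, one_pow]
    ring
  · rw [f.orthonormal.2 hk.symm, mul_zero, mul_zero]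

theorem hasSum_norm_apply_sq (hT : ∀ k, T (f k) = (lam k : 𝕜) • f k) (x : E) :
    HasSum (fun k => lam k ^ 2 * ‖⟪f k, x⟫‖ ^ 2) (‖T x‖ ^ 2) := by
  convert f.hasSum_norm_inner_sq (T x) using 2 with k
  rw [inner_apply_of_apply_eq_smul hT, norm_mul, mul_pow, norm_ofReal, sq_abs]

theorem hasSum_re_inner_apply (hT : ∀ k, T (f k) = (lam k : 𝕜) • f k) (x : E) :
    HasSum (fun k => lam k * ‖⟪f k, x⟫‖ ^ 2) (re ⟪x, T x⟫) := by
  convert hasSum_re 𝕜 (f.hasSum_inner_mul_inner x (T x)) using 2 with k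
  rw [inner_apply_of_apply_eq_smul hT, ← inner_conj_symm x,
    mul_left_comm, RCLike.conj_mul, ← ofReal_pow, ← ofReal_mul, ofReal_re]

theorem tsum_sq_eq_tsum_norm_apply_sq (e : HilbertBasis ι 𝕜 E)
    (hT : ∀ k, T (f k) = (lam k : 𝕜) • f k) (hlam : Summable lam) :
    ∑' k, lam k ^ 2 = ∑' i, ‖T (e i)‖ ^ 2 := by
  rw [← e.tsum_tsum_mul_norm_inner_sq f hlam.sq]
  exact tsum_congr fun i => (hasSum_norm_apply_sq hT (e i)).tsum_eq

theorem tsum_eq_tsum_re_inner_apply (e : HilbertBasis ι 𝕜 E)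
    (hT : ∀ k, T (f k) = (lam k : 𝕜) • f k) (hlam : Summable lam) :
    ∑' k, lam k = ∑' i, re ⟪e i, T (e i)⟫ := by
  rw [← e.tsum_tsum_mul_norm_inner_sq f hlam]
  exact tsum_congr fun i => (hasSum_re_inner_apply hT (e i)).tsum_eq

end Diagonal

end HilbertBasis

theorem tsum_abs_le_two_mul_of_tsum_eq_zero {lam : κ → ℝ} {ε : ℝ} (hlam : Summable lam)
    (hzero : ∑' k, lam k = 0) (hneg : ∀ k l, lam k < 0 → lam l < 0 → k = l)
    (hle : ∀ k, |lam k| ≤ ε) (hε : 0 ≤ ε) :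
    ∑' k, |lam k| ≤ 2 * ε := by
  have hnegPart : ∑' k, (lam k)⁻ ≤ ε := by
    by_cases h : ∃ k, lam k < 0
    · obtain ⟨k₀, hk₀⟩ := h
      rw [tsum_eq_single k₀ fun k hk => negPart_eq_zero.2 (not_lt.1 fun h => hk (hneg k k₀ h hk₀)),
        negPart_eq_neg.2 hk₀.le, ← abs_of_neg hk₀]
      exact hle k₀
    · push Not at h
      simpa [negPart_eq_zero.2 (h _)] using hε
  calc ∑' k, |lam k| = ∑' k, (|lam k| - lam k) := by rw [hlam.abs.tsum_sub hlam, hzero, sub_zero]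
    _ = 2 * ∑' k, (lam k)⁻ := by
      rw [← tsum_mul_left]
      simp only [abs_sub_eq_two_nsmul_negPart, nsmul_eq_mul, Nat.cast_ofNat]
    _ ≤ 2 * ε := by gcongr

section NonnegOnHyperplane
variable {T : E →L[𝕜] E} {φ : E}

theorem inner_ne_zero_of_apply_eq_smul_of_neg (hT : ∀ x, ⟪φ, x⟫ = 0 → 0 ≤ re ⟪x, T x⟫)
    {u : E} (hu : u ≠ 0) {a : ℝ} (ha : a < 0) (hTu : T u = (a : 𝕜) • u) : ⟪φ, u⟫ ≠ 0 := by
  intro h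
  have hnonneg := hT u h
  rw [hTu, inner_smul_right, inner_self_eq_norm_sq_to_K, ← ofReal_pow, ← ofReal_mul,
    ofReal_re] at hnonneg
  linarith [mul_neg_of_neg_of_pos ha (pow_pos (norm_pos_iff.2 hu) 2)]

theorem Orthonormal.eq_of_apply_eq_smul_of_neg (hT : ∀ x, ⟪φ, x⟫ = 0 → 0 ≤ re ⟪x, T x⟫)
    {v : κ → E} (hv : Orthonormal 𝕜 v) {lam : κ → ℝ} (hTv : ∀ k, T (v k) = (lam k : 𝕜) • v k)
    {k l : κ} (hk : lam k < 0) (hl : lam l < 0) : k = l := by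
  by_contra hkl
  set α := ⟪φ, v k⟫
  set β := ⟪φ, v l⟫
  have hα : α ≠ 0 := inner_ne_zero_of_apply_eq_smul_of_neg hT (hv.ne_zero k) hk (hTv k)
  set w := β • v k - α • v l
  have hw : ⟪φ, w⟫ = 0 := by
    simp only [w, inner_sub_right, inner_smul_right]
    ring
  have hTw : re ⟪w, T w⟫ = lam k * ‖β‖ ^ 2 + lam l * ‖α‖ ^ 2 := by
    simp only [w, map_sub, map_smul, hTv, inner_sub_left, inner_sub_right, inner_smul_left,
      inner_smul_right, hv.inner_eq_zero hkl, hv.inner_eq_zero (Ne.symm hkl),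
      inner_self_eq_norm_sq_to_K, hv.1]
    simp only [ofReal_one, one_pow, mul_one, mul_zero, sub_zero, zero_sub, mul_neg, map_neg,
      sub_neg_eq_add, mul_left_comm _ (lam _ : 𝕜), RCLike.mul_conj, ← ofReal_pow, ← ofReal_mul,
      ofReal_re]
  linarith [hT w hw, mul_neg_of_neg_of_pos hl (pow_pos (norm_pos_iff.2 hα) 2),
    mul_nonpos_of_nonpos_of_nonneg hk.le (sq_nonneg ‖β‖)]

end NonnegOnHyperplane

/-- (L² error controls trace-norm convergence) Let `γ` be a positive trace-class
operator on a Hilbert space with `Tr γ = 1`, and let `P = |φ⟩⟨φ|` be a rank-one projection. If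
`‖γ − P‖_{HS} ≤ ε`, then `Tr|γ − P| ≤ C ε` for an absolute constant `C`.

The trace is expressed via a Hilbert basis `e`, the Hilbert–Schmidt norm via
`∑ᵢ ‖(γ−P)(e i)‖²`, and the trace norm of the self-adjoint compact operator `γ − P` via a
diagonalizing Hilbert basis `f` with real eigenvalues `lam`, as `∑ₖ |lam k|`. -/
theorem trace_norm_from_HS :
    ∃ C : ℝ, 0 < C ∧
      ∀ (H : Type) [NormedAddCommGroup H] [InnerProductSpace ℂ H] [CompleteSpace H]
        (γ P : H →L[ℂ] H) (φ : H) (ι κ : Type)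
        (e : HilbertBasis ι ℂ H) (f : HilbertBasis κ ℂ H) (lam : κ → ℝ) (ε : ℝ),
        ‖φ‖ = 1 →
        (∀ ξ : H, P ξ = (inner ℂ φ ξ : ℂ) • φ) →
        γ.IsPositive →
        HasSum (fun i => (inner ℂ (e i) (γ (e i)) : ℂ).re) 1 →
        (∀ k, γ (f k) - P (f k) = (lam k : ℂ) • f k) →
        Summable (fun k => |lam k|) →
        0 ≤ ε →
        (∑' i, ‖γ (e i) - P (e i)‖ ^ 2) ≤ ε ^ 2 →
        (∑' k, |lam k|) ≤ C * ε := by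
  refine ⟨2, two_pos, ?_⟩
  intro H _ _ _ γ P φ ι κ e f lam ε hφ hP hγ hγtr hf hlamabs hε hHS
  have hT : ∀ k, (γ - P) (f k) = (lam k : ℂ) • f k := hf
  have hlam : Summable lam := hlamabs.of_abs
  have hPtr := e.hasSum_re_inner_apply_of_apply_eq_inner_smul hP
  rw [hφ, one_pow] at hPtr
  have htrace : ∑' k, lam k = 0 := by
    rw [HilbertBasis.tsum_eq_tsum_re_inner_apply e hT hlam, ← sub_self (1 : ℝ),
      ← (hγtr.sub hPtr).tsum_eq]
    simp [inner_sub_right]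
  have hbound : ∀ k, |lam k| ≤ ε := fun k =>
    abs_le_of_sq_le_sq ((hlam.sq.le_tsum k fun j _ => sq_nonneg _).trans
      ((HilbertBasis.tsum_sq_eq_tsum_norm_apply_sq e hT hlam).trans_le hHS)) hε
  have hnonneg : ∀ x, inner ℂ φ x = 0 → 0 ≤ re (inner ℂ x ((γ - P) x)) := fun x hx => by
    simpa [hP x, hx] using hγ.re_inner_nonneg_right x
  exact tsum_abs_le_two_mul_of_tsum_eq_zero hlam htrace
    (fun k l => f.orthonormal.eq_of_apply_eq_smul_of_neg hnonneg hT) hbound hε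
end
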